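/- Let Y be a functional extension of X, let n be a positive natural number, and let p₁, …, pₙ, q₁, …, qₙ : X → X and ξ, η ∈ Y satisfy pᵢ*(ξ) = qᵢ*(η) for every i = 1, …, n. Then for every function F : Xⁿ → X one has (F ∘ (p₁, …, pₙ))*(ξ) = (F ∘ (q₁, …, qₙ))*(η), where F ∘ (p₁, …, pₙ) : X → X denotes the map x ↦ F(p₁ x, …, pₙ x). -/

import Mathlib

attribute [local instance] Classical.propDecidable

/-- A functional extension of `X`: a proper superset `Y ⊇ X` (given via an injective,
non-surjective inclusion) with two designated distinct elements `0, 1 ∈ X`, together with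
a distinguished extension `star f : Y → Y` of every `f : X → X`, preserving compositions
and equalizers, and with directed Puritz preorder. -/
structure FunctionalExtension (X Y : Type*) where
  zero : X
  one : X
  zero_ne_one : zero ≠ one
  incl : X → Y
  incl_injective : Function.Injective incl
  proper : ¬ Function.Surjective incl
  star : (X → X) → Y → Y
  star_incl : ∀ (f : X → X) (x : X), star f (incl x) = incl (f x)
  comp : ∀ f g : X → X, star (g ∘ f) = star g ∘ star f
  equ : ∀ f g : X → X,
    star (fun x => if f x = g x then one else zero) =
      fun ξ => if star f ξ = star g ξ then incl one else incl zero
  dir : ∀ ξ η : Y, ∃ (p₁ p₂ : X → X) (ζ : Y), star p₁ ζ = ξ ∧ star p₂ ζ = η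

namespace FunctionalExtension

variable {X Y : Type*}

/-- The star-extension `*A ⊆ Y` of a subset `A ⊆ X`:
the set where the extension of the characteristic function of `A` takes the value `1`. -/
def sets (E : FunctionalExtension X Y) (A : Set X) : Set Y :=
  {ξ | E.star (fun x => if x ∈ A then E.one else E.zero) ξ = E.incl E.one}

/-- The S-topology on `Y`: the topology with basis `{*A : A ⊆ X}`. -/
def sTopology (E : FunctionalExtension X Y) : TopologicalSpace Y :=
  TopologicalSpace.generateFrom (Set.range E.sets)

variable (E : FunctionalExtension X Y)

lemma incl_one_ne_incl_zero : E.incl E.one ≠ E.incl E.zero :=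
  fun h => E.zero_ne_one (E.incl_injective h.symm)

lemma star_id (ξ : Y) : E.star id ξ = ξ := by
  obtain ⟨p₁, p₂, ζ, h1, _⟩ := E.dir ξ ξ
  have h2 : E.star (id ∘ p₁) ζ = E.star id (E.star p₁ ζ) := congrFun (E.comp p₁ id) ζ
  have h3 : E.star (id ∘ p₁) ζ = E.star p₁ ζ := rfl
  rw [← h1, ← h2, h3]

lemma star_const (c : X) (ζ : Y) : E.star (fun _ => c) ζ = E.incl c := by
  have h1 : E.star (fun x => if id x = id x then E.one else E.zero) ζ = E.incl E.one := by
    rw [E.equ id id]; simp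
  have h1' : E.star (fun _ : X => E.one) ζ = E.incl E.one := by
    have : (fun x : X => if id x = id x then E.one else E.zero) = fun _ : X => E.one := by
      funext x; rw [if_pos rfl]
    rw [← this]; exact h1
  have h2 : E.star ((fun _ : X => c) ∘ (fun _ : X => E.one)) ζ
      = E.star (fun _ : X => c) (E.star (fun _ : X => E.one) ζ) :=
    congrFun (E.comp (fun _ : X => E.one) (fun _ : X => c)) ζ
  rw [h1', E.star_incl] at h2
  exact h2

lemma equ' (f g : X → X) (ζ : Y) :
    E.star f ζ = E.star g ζ ↔
      E.star (fun x => if f x = g x then E.one else E.zero) ζ = E.incl E.one := by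
  rw [congrFun (E.equ f g) ζ]
  split_ifs with hc
  · simp [hc]
  · exact iff_of_false hc (fun hz => E.incl_one_ne_incl_zero hz.symm)

lemma star_congr (P : X → Prop) [∀ x, Decidable (P x)] (ζ : Y)
    (hP : E.star (fun x => if P x then E.one else E.zero) ζ = E.incl E.one)
    (u v : X → X) (huv : ∀ x, P x → u x = v x) :
    E.star u ζ = E.star v ζ := by
  by_cases hne : ∃ x₀, P x₀
  · obtain ⟨x₀, hx₀⟩ := hne
    set d : X → X := fun x => if P x then x else x₀ with hd
    have hEq : (fun x => if d x = id x then E.one else E.zero)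
        = fun x => if P x then E.one else E.zero := by
      funext x
      by_cases h : P x
      · rw [if_pos h, if_pos]
        simp [hd, h]
      · rw [if_neg h, if_neg]
        intro hx
        simp only [hd, id_eq] at hx
        rw [if_neg h] at hx
        exact h (hx ▸ hx₀)
    have hdζ : E.star d ζ = ζ := by
      have h5 := (E.equ' d id ζ).mpr (by rw [hEq]; exact hP)
      rw [E.star_id] at h5
      exact h5
    have hcomp : u ∘ d = v ∘ d := by
      funext x
      by_cases h : P x
      · simp [hd, h, huv x h]
      · simp [hd, h, huv x₀ hx₀]
    calc E.star u ζ = E.star u (E.star d ζ) := by rw [hdζ]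
      _ = E.star (u ∘ d) ζ := (congrFun (E.comp d u) ζ).symm
      _ = E.star (v ∘ d) ζ := by rw [hcomp]
      _ = E.star v (E.star d ζ) := congrFun (E.comp d v) ζ
      _ = E.star v ζ := by rw [hdζ]
  · exfalso
    push_neg at hne
    have h6 : (fun x => if P x then E.one else E.zero) = fun _ : X => E.zero := by
      funext x; rw [if_neg (hne x)]
    rw [h6, E.star_const] at hP
    exact E.incl_one_ne_incl_zero hP.symm

lemma star_forall (n : ℕ) (a b : Fin n → X → X) (ζ : Y)
    (h : ∀ i, E.star (a i) ζ = E.star (b i) ζ) :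
    E.star (fun x => if (∀ i, a i x = b i x) then E.one else E.zero) ζ = E.incl E.one := by
  induction n with
  | zero =>
    have h0 : (fun x => if (∀ i : Fin 0, a i x = b i x) then E.one else E.zero)
        = fun _ : X => E.one := by
      funext x; rw [if_pos (fun i => i.elim0)]
    rw [h0, E.star_const]
  | succ m ih =>
    have hP := ih (fun i => a i.castSucc) (fun i => b i.castSucc) (fun i => h i.castSucc)
    have hQ : E.star (fun x => if a (Fin.last m) x = b (Fin.last m) x then E.one else E.zero) ζ
        = E.incl E.one := (E.equ' _ _ ζ).mp (h (Fin.last m))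
    have hkey := E.star_congr (fun x => ∀ i : Fin m, a i.castSucc x = b i.castSucc x) ζ hP
      (fun x => if (∀ i : Fin (m + 1), a i x = b i x) then E.one else E.zero)
      (fun x => if a (Fin.last m) x = b (Fin.last m) x then E.one else E.zero)
      (by
        intro x hx
        by_cases hl : a (Fin.last m) x = b (Fin.last m) x
        · rw [if_pos hl, if_pos]
          exact fun i => Fin.lastCases hl hx i
        · rw [if_neg (fun hall => hl (hall (Fin.last m))), if_neg hl])
    rw [hkey]
    exact hQ

end FunctionalExtension

/-- If `pᵢ*(ξ) = qᵢ*(η)` for every `i = 1, …, n`, then for every `F : Xⁿ → X` one has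
`(F ∘ (p₁, …, pₙ))*(ξ) = (F ∘ (q₁, …, qₙ))*(η)`. -/
theorem stmt12 {X Y : Type*} (E : FunctionalExtension X Y) (n : ℕ) (hn : 0 < n)
    (p q : Fin n → X → X) (ξ η : Y)
    (h : ∀ i : Fin n, E.star (p i) ξ = E.star (q i) η)
    (F : (Fin n → X) → X) :
    E.star (fun x => F fun i => p i x) ξ = E.star (fun x => F fun i => q i x) η := by
  obtain ⟨r₁, r₂, ζ, h1, h2⟩ := E.dir ξ η
  have ha : ∀ i, E.star (p i ∘ r₁) ζ = E.star (q i ∘ r₂) ζ := by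
    intro i
    calc E.star (p i ∘ r₁) ζ = E.star (p i) (E.star r₁ ζ) := congrFun (E.comp r₁ (p i)) ζ
      _ = E.star (q i) (E.star r₂ ζ) := by rw [h1, h2]; exact h i
      _ = E.star (q i ∘ r₂) ζ := (congrFun (E.comp r₂ (q i)) ζ).symm
  have hforall := E.star_forall n (fun i => p i ∘ r₁) (fun i => q i ∘ r₂) ζ ha
  have hkey := E.star_congr (fun x => ∀ i, (p i ∘ r₁) x = (q i ∘ r₂) x) ζ hforall
    (fun x => F fun i => p i (r₁ x)) (fun x => F fun i => q i (r₂ x))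
    (fun x hx => congrArg F (funext hx))
  calc E.star (fun x => F fun i => p i x) ξ
      = E.star (fun x => F fun i => p i x) (E.star r₁ ζ) := by rw [h1]
    _ = E.star ((fun x => F fun i => p i x) ∘ r₁) ζ :=
        (congrFun (E.comp r₁ (fun x => F fun i => p i x)) ζ).symm
    _ = E.star (fun x => F fun i => p i (r₁ x)) ζ := rfl
    _ = E.star (fun x => F fun i => q i (r₂ x)) ζ := hkey
    _ = E.star ((fun x => F fun i => q i x) ∘ r₂) ζ := rfl
    _ = E.star (fun x => F fun i => q i x) (E.star r₂ ζ) :=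
        congrFun (E.comp r₂ (fun x => F fun i => q i x)) ζ
    _ = E.star (fun x => F fun i => q i x) η := by rw [h2]
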